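/- arXiv:2004.14539 — 6 statements merged into one kernel-verified Lean document; each statement's English description precedes it below -/
import Mathlib

section
/- Let n ≥ 1, M > 0, let V be a finite nonempty subset of [0, M]^n ⊆ ℝ^n, let P = conv(V), and let c ∈ ℝ^n with c ≥ 0 entrywise. Let μ = min_{x ∈ P} cᵀx. Suppose there exists v ∈ V with cᵀv > μ, and let δ = min{cᵀv − μ : v ∈ V, cᵀv > μ} > 0. If 0 < γ < δ/(nM), then every minimizer x̂ of the γ-perturbed objective ĉᵀx over P satisfies cᵀx̂ = μ; that is, every optimal solution of the γ-perturbed LP is also an optimal solution of the original LP. -/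
open Matrix

/-- if 0 < γ < δ/(nM), every optimal solution of the γ-perturbed LP
over the polytope P = conv(V) is an optimal solution of the original LP. -/
theorem perturbed_min_is_orig_min
    (n : ℕ) (hn : 1 ≤ n) (M : ℝ) (hM : 0 < M)
    (V : Finset (Fin n → ℝ)) (hV : V.Nonempty)
    (hVbox : ∀ v ∈ V, ∀ i, 0 ≤ v i ∧ v i ≤ M)
    (P : Set (Fin n → ℝ)) (hP : P = convexHull ℝ (V : Set (Fin n → ℝ)))
    (c : Fin n → ℝ) (hc : ∀ i, 0 ≤ c i)
    (μ : ℝ) (hμ₁ : ∀ x ∈ P, μ ≤ c ⬝ᵥ x) (hμ₂ : ∃ x ∈ P, c ⬝ᵥ x = μ)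
    (hex : ∃ v ∈ V, μ < c ⬝ᵥ v)
    (δ : ℝ) (hδpos : 0 < δ)
    (hδ₁ : ∀ v ∈ V, μ < c ⬝ᵥ v → δ ≤ c ⬝ᵥ v - μ)
    (hδ₂ : ∃ v ∈ V, μ < c ⬝ᵥ v ∧ c ⬝ᵥ v - μ = δ)
    (γ : ℝ) (hγ0 : 0 < γ) (hγ : γ < δ / (n * M))
    (chat : Fin n → ℝ) (hchat : ∀ i, chat i = if 0 < c i then c i else γ)
    (xhat : Fin n → ℝ) (hxhatP : xhat ∈ P)
    (hxhatmin : ∀ x ∈ P, chat ⬝ᵥ xhat ≤ chat ⬝ᵥ x) :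
    c ⬝ᵥ xhat = μ := by
  classical
  have hn' : (0:ℝ) < (n:ℝ) := by exact_mod_cast hn
  have hnM : (0:ℝ) < (n:ℝ) * M := mul_pos hn' hM
  have hγnM : (n:ℝ) * (γ * M) < δ := by
    have h := (lt_div_iff₀ hnM).mp hγ
    nlinarith
  -- entrywise comparisons
  have hcc : ∀ i, c i ≤ chat i := by
    intro i; rw [hchat]
    split_ifs with h
    · exact le_rfl
    · exact (le_of_not_gt h).trans hγ0.le
  have hdiff : ∀ i, chat i - c i ≤ γ := by
    intro i; rw [hchat]
    split_ifs with h
    · simpa using hγ0.le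
    · have : c i = 0 := le_antisymm (le_of_not_gt h) (hc i)
      simp [this]
  -- vertices lie in P
  have hVP : ∀ v ∈ V, v ∈ P := by
    intro v hv
    rw [hP]
    exact subset_convexHull ℝ _ hv
  have hμV : ∀ v ∈ V, μ ≤ c ⬝ᵥ v := fun v hv => hμ₁ v (hVP v hv)
  -- c ⬝ᵥ v ≤ chat ⬝ᵥ v for v in the box
  have hcchat : ∀ v ∈ V, c ⬝ᵥ v ≤ chat ⬝ᵥ v := by
    intro v hv
    apply Finset.sum_le_sum
    intro i _
    exact mul_le_mul_of_nonneg_right (hcc i) (hVbox v hv i).1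
  -- chat ⬝ᵥ v ≤ c ⬝ᵥ v + n * (γ * M) for v ∈ V
  have hchatub : ∀ v ∈ V, chat ⬝ᵥ v ≤ c ⬝ᵥ v + (n:ℝ) * (γ * M) := by
    intro v hv
    have h1 : chat ⬝ᵥ v - c ⬝ᵥ v = ∑ i, (chat i - c i) * v i := by
      simp [dotProduct, ← Finset.sum_sub_distrib, sub_mul]
    have h2 : ∑ i, (chat i - c i) * v i ≤ ∑ _i : Fin n, γ * M := by
      apply Finset.sum_le_sum
      intro i _
      have hv0 := (hVbox v hv i).1
      have hvM := (hVbox v hv i).2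
      have h3 : 0 ≤ chat i - c i := sub_nonneg.mpr (hcc i)
      calc (chat i - c i) * v i ≤ γ * v i :=
            mul_le_mul_of_nonneg_right (hdiff i) hv0
        _ ≤ γ * M := mul_le_mul_of_nonneg_left hvM hγ0.le
    have h4 : (∑ _i : Fin n, γ * M) = (n:ℝ) * (γ * M) := by
      simp [Finset.sum_const, mul_comm]
    linarith [h1 ▸ h2, h4 ▸ h2]
  -- linearity of dot product over convex combinations
  have hlin : ∀ (d : Fin n → ℝ) (w : (Fin n → ℝ) → ℝ),
      d ⬝ᵥ (∑ v ∈ V, w v • v) = ∑ v ∈ V, w v * (d ⬝ᵥ v) := by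
    intro d w
    simp only [dotProduct, Finset.sum_apply, Pi.smul_apply, smul_eq_mul, Finset.mul_sum]
    rw [Finset.sum_comm]
    apply Finset.sum_congr rfl
    intro v _
    apply Finset.sum_congr rfl
    intro i _
    ring
  -- decompose xhat as a convex combination
  have hxhat' := hxhatP
  rw [hP, Finset.convexHull_eq] at hxhat'
  obtain ⟨w, hw0, hw1, hwx⟩ := hxhat'
  rw [Finset.centerMass_eq_of_sum_1 _ _ hw1] at hwx
  simp only [id] at hwx
  -- there is a good vertex: some v ∈ V with c ⬝ᵥ v ≤ μ
  have hlinmap : IsLinearMap ℝ (fun x : Fin n → ℝ => c ⬝ᵥ x) := by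
    constructor
    · intro x y; simp [dotProduct, mul_add, Finset.sum_add_distrib]
    · intro a x; simp [dotProduct, Finset.mul_sum, mul_left_comm]
  have hgoodex : ∃ v ∈ V, c ⬝ᵥ v ≤ μ := by
    by_contra hcon
    push_neg at hcon
    have hsub : P ⊆ {x | μ + δ ≤ c ⬝ᵥ x} := by
      rw [hP]
      apply convexHull_min
      · intro v hv
        have hv' : v ∈ V := hv
        have := hδ₁ v hv' (hcon v hv')
        simp only [Set.mem_setOf_eq]
        linarith
      · exact convex_halfSpace_ge hlinmap _
    obtain ⟨xs, hxs, hxsμ⟩ := hμ₂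
    have := hsub hxs
    simp only [Set.mem_setOf_eq, hxsμ] at this
    linarith
  -- good / bad split
  set good : Finset (Fin n → ℝ) := V.filter (fun v => c ⬝ᵥ v ≤ μ) with hgood
  set bad : Finset (Fin n → ℝ) := V.filter (fun v => ¬ (c ⬝ᵥ v ≤ μ)) with hbad
  have hgoodne : good.Nonempty := by
    obtain ⟨v, hv, hvle⟩ := hgoodex
    exact ⟨v, Finset.mem_filter.mpr ⟨hv, hvle⟩⟩
  obtain ⟨v₁, hv₁, hv₁min⟩ := good.exists_min_image (fun v => chat ⬝ᵥ v) hgoodne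
  have hv₁V : v₁ ∈ V := (Finset.mem_filter.mp hv₁).1
  have hv₁μ : c ⬝ᵥ v₁ = μ := le_antisymm (Finset.mem_filter.mp hv₁).2 (hμV v₁ hv₁V)
  set m : ℝ := chat ⬝ᵥ v₁ with hm
  have hmlt : m < μ + δ := by
    have := hchatub v₁ hv₁V
    rw [hv₁μ] at this
    linarith
  -- upper bound on chat ⬝ᵥ xhat
  have hub : chat ⬝ᵥ xhat ≤ m := hxhatmin v₁ (hVP v₁ hv₁V)
  -- lower bound via the decomposition
  have hsplitw : ∑ v ∈ good, w v + ∑ v ∈ bad, w v = 1 := by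
    rw [hgood, hbad, Finset.sum_filter_add_sum_filter_not]
    exact hw1
  set t : ℝ := ∑ v ∈ bad, w v with ht
  have ht0 : 0 ≤ t :=
    Finset.sum_nonneg fun v hv => hw0 v (Finset.mem_filter.mp hv).1
  have hexp : chat ⬝ᵥ xhat = ∑ v ∈ good, w v * (chat ⬝ᵥ v) + ∑ v ∈ bad, w v * (chat ⬝ᵥ v) := by
    rw [← hwx, hlin, hgood, hbad, Finset.sum_filter_add_sum_filter_not]
  have hgoodlb : ∑ v ∈ good, w v * (chat ⬝ᵥ v) ≥ (∑ v ∈ good, w v) * m := by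
    rw [Finset.sum_mul]
    apply Finset.sum_le_sum
    intro v hv
    exact mul_le_mul_of_nonneg_left (hv₁min v hv) (hw0 v (Finset.mem_filter.mp hv).1)
  have hbadlb : ∑ v ∈ bad, w v * (chat ⬝ᵥ v) ≥ t * (μ + δ) := by
    rw [ht, Finset.sum_mul]
    apply Finset.sum_le_sum
    intro v hv
    have hvV : v ∈ V := (Finset.mem_filter.mp hv).1
    have hvgt : μ < c ⬝ᵥ v := lt_of_not_ge (Finset.mem_filter.mp hv).2
    have h1 : μ + δ ≤ c ⬝ᵥ v := by linarith [hδ₁ v hvV hvgt]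
    have h2 : μ + δ ≤ chat ⬝ᵥ v := h1.trans (hcchat v hvV)
    exact mul_le_mul_of_nonneg_left h2 (hw0 v hvV)
  -- conclude t = 0
  have hteq : t = 0 := by
    have hkey : m ≥ (1 - t) * m + t * (μ + δ) := by
      have : (∑ v ∈ good, w v) = 1 - t := by rw [ht]; linarith
      calc m ≥ chat ⬝ᵥ xhat := hub
        _ = ∑ v ∈ good, w v * (chat ⬝ᵥ v) + ∑ v ∈ bad, w v * (chat ⬝ᵥ v) := hexp
        _ ≥ (1 - t) * m + t * (μ + δ) := by
            rw [← this]; exact add_le_add hgoodlb hbadlb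
    nlinarith
  have hbadzero : ∀ v ∈ bad, w v = 0 := by
    intro v hv
    exact (Finset.sum_eq_zero_iff_of_nonneg
      (fun u hu => hw0 u (Finset.mem_filter.mp hu).1)).mp hteq v hv
  -- final computation
  have hfin : c ⬝ᵥ xhat = ∑ v ∈ good, w v * (c ⬝ᵥ v) + ∑ v ∈ bad, w v * (c ⬝ᵥ v) := by
    rw [← hwx, hlin, hgood, hbad, Finset.sum_filter_add_sum_filter_not]
  have h1 : ∑ v ∈ bad, w v * (c ⬝ᵥ v) = 0 :=
    Finset.sum_eq_zero fun v hv => by rw [hbadzero v hv, zero_mul]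
  have h2 : ∑ v ∈ good, w v * (c ⬝ᵥ v) = ∑ v ∈ good, w v * μ := by
    apply Finset.sum_congr rfl
    intro v hv
    rw [le_antisymm (Finset.mem_filter.mp hv).2 (hμV v (Finset.mem_filter.mp hv).1)]
  have h3 : (∑ v ∈ good, w v) = 1 := by rw [hteq] at hsplitw; linarith
  rw [hfin, h1, h2, ← Finset.sum_mul, h3]
  ring
end

section
/- Let V be a finite nonempty subset of ℝ^n, P = conv(V), and c ∈ ℝ^n. Then there exists r > 0 such that for every c' ∈ ℝ^n with ‖c' − c‖₂ < r, every minimizer of c'ᵀx over P is also a minimizer of cᵀx over P. In other words, the set of optimal solutions of a linear program over a polytope is invariant (can only shrink) under all sufficiently small perturbations of the cost vector. -/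
open scoped RealInnerProductSpace

/-!
For `c'` close enough to `c`, every strict inequality `⟪c, u⟫ < ⟪c, v⟫` between points of the finite
set `V` persists for `c'`. A minimizer of `c'` over `conv V` is a convex combination of points of `V`
minimizing `c'` over `V`; by this persistence they minimize `c` over `V`, hence so does their convex
combination over `conv V`.
-/

open Filter Topology

section LinearFunctional

variable {E : Type*} [AddCommGroup E] [Module ℝ E]

theorem LinearMap.le_of_mem_convexHull (f : E →ₗ[ℝ] ℝ) {s : Set E} {a : ℝ}
    (h : ∀ x ∈ s, a ≤ f x) {x : E} (hx : x ∈ convexHull ℝ s) : a ≤ f x :=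
  convexHull_min h (convex_halfSpace_ge f.isLinear a) hx

/-- The weighted excesses `w i * (f (z i) - f y)` are nonnegative and sum to zero, so every point
with positive weight attains the minimum. -/
theorem LinearMap.mem_convexHull_setOf_eq_of_isMinOn (f : E →ₗ[ℝ] ℝ) {s : Set E} {y : E}
    (hy : y ∈ convexHull ℝ s) (hmin : IsMinOn f s y) :
    y ∈ convexHull ℝ {x ∈ s | f x = f y} := by
  rw [convexHull_eq] at hy
  obtain ⟨ι, t, w, z, hw₀, hw₁, hz, rfl⟩ := hy
  set y := t.centerMass w z
  have hfy : f y = ∑ i ∈ t, w i * f (z i) := by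
    simp [y, Finset.centerMass_eq_of_sum_1 _ _ hw₁, map_sum]
  have hexcess : ∑ i ∈ t, w i * (f (z i) - f y) = 0 := by
    simp [mul_sub, Finset.sum_sub_distrib, ← Finset.sum_mul, hw₁, ← hfy]
  have hzero := (Finset.sum_eq_zero_iff_of_nonneg fun i hi =>
    mul_nonneg (hw₀ i hi) (sub_nonneg.2 (hmin (hz i hi)))).1 hexcess
  suffices (t.filter (w · ≠ 0)).centerMass w z ∈ convexHull ℝ {x ∈ s | f x = f y} by
    rwa [Finset.centerMass_filter_ne_zero] at this
  refine Finset.centerMass_mem_convexHull _ (fun i hi => hw₀ i (Finset.mem_of_mem_filter i hi))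
    (by rw [Finset.sum_filter_ne_zero, hw₁]; exact one_pos) fun i hi => ?_
  obtain ⟨hi, hwi⟩ := Finset.mem_filter.1 hi
  exact ⟨hz i hi, sub_eq_zero.1 ((mul_eq_zero.1 (hzero i hi)).resolve_left hwi)⟩

theorem LinearMap.isMinOn_convexHull_of_forall_lt_imp_lt (f g : E →ₗ[ℝ] ℝ) {s : Set E}
    (hfg : ∀ u ∈ s, ∀ v ∈ s, f u < f v → g u < g v) {y : E} (hy : y ∈ convexHull ℝ s)
    (hmin : IsMinOn g (convexHull ℝ s) y) : IsMinOn f (convexHull ℝ s) y := by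
  have hgmin : IsMinOn g s y := hmin.on_subset (subset_convexHull ℝ s)
  have hface : ∀ x ∈ {x ∈ s | g x = g y}, ∀ v ∈ s, f x ≤ f v := by
    rintro x ⟨hx, hgx⟩ v hv
    by_contra! hlt
    exact (hgx ▸ hgmin hv).not_gt (hfg v hv x hx hlt)
  have hfy : ∀ v ∈ s, f y ≤ f v := fun v hv =>
    (convexHull_min (fun x hx => hface x hx v hv) (convex_halfSpace_le f.isLinear (f v)) :
      convexHull ℝ {x ∈ s | g x = g y} ⊆ {x | f x ≤ f v})
      (g.mem_convexHull_setOf_eq_of_isMinOn hy hgmin)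
  exact fun x hx => f.le_of_mem_convexHull hfy hx

end LinearFunctional

theorem eventually_nhds_forall_inner_lt_of_inner_lt {F : Type*} [NormedAddCommGroup F]
    [InnerProductSpace ℝ F] {s : Set F} (hs : s.Finite) (c : F) :
    ∀ᶠ c' in 𝓝 c, ∀ u ∈ s, ∀ v ∈ s, ⟪c, u⟫ < ⟪c, v⟫ → ⟪c', u⟫ < ⟪c', v⟫ := by
  simp only [hs.eventually_all, eventually_imp_distrib_left]
  intro u _ v _ h
  exact ((continuous_id.inner continuous_const).tendsto c).eventually_lt
    ((continuous_id.inner continuous_const).tendsto c) h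

theorem lp_optimal_set_stable_under_small_perturbation_general
    (n : ℕ) (V : Finset (EuclideanSpace ℝ (Fin n)))
    (P : Set (EuclideanSpace ℝ (Fin n)))
    (hP : P = convexHull ℝ (V : Set (EuclideanSpace ℝ (Fin n))))
    (c : EuclideanSpace ℝ (Fin n)) :
    ∃ r > 0, ∀ c' : EuclideanSpace ℝ (Fin n), ‖c' - c‖ < r →
      ∀ y ∈ P, (∀ x ∈ P, ⟪c', y⟫ ≤ ⟪c', x⟫) → (∀ x ∈ P, ⟪c, y⟫ ≤ ⟪c, x⟫) := by
  obtain ⟨r, hr, hpreserve⟩ := Metric.eventually_nhds_iff.1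
    (eventually_nhds_forall_inner_lt_of_inner_lt V.finite_toSet c)
  refine ⟨r, hr, fun c' hc' y hy hmin => ?_⟩
  subst hP
  exact (innerₛₗ ℝ c).isMinOn_convexHull_of_forall_lt_imp_lt (innerₛₗ ℝ c')
    (hpreserve (by rwa [dist_eq_norm])) hy hmin

/-- the optimal solution set of a LP over a polytope is invariant
(can only shrink) under all sufficiently small perturbations of the cost vector. -/
theorem lp_optimal_set_stable_under_small_perturbation
    (n : ℕ) (V : Finset (EuclideanSpace ℝ (Fin n))) (hV : V.Nonempty)
    (P : Set (EuclideanSpace ℝ (Fin n)))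
    (hP : P = convexHull ℝ (V : Set (EuclideanSpace ℝ (Fin n))))
    (c : EuclideanSpace ℝ (Fin n)) :
    ∃ r > 0, ∀ c' : EuclideanSpace ℝ (Fin n), ‖c' - c‖ < r →
      ∀ y ∈ P, (∀ x ∈ P, ⟪c', y⟫ ≤ ⟪c', x⟫) → (∀ x ∈ P, ⟪c, y⟫ ≤ ⟪c, x⟫) :=
  lp_optimal_set_stable_under_small_perturbation_general n V P hP c
end

section
/- Let V be a finite nonempty subset of ℝ^n, P = conv(V), and let R > 0 satisfy ‖v‖₂ ≤ R for all v ∈ V. Let c ∈ ℝ^n, μ = min_{x ∈ P} cᵀx, suppose there exists v ∈ V with cᵀv > μ, and let δ = min{cᵀv − μ : v ∈ V, cᵀv > μ} > 0. Then for every c' ∈ ℝ^n with 2R·‖c' − c‖₂ < δ, every minimizer of c'ᵀx over P is also a minimizer of cᵀx over P. -/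
open scoped RealInnerProductSpace

/-- quantitative stability of LP minimizers over a polytope under
cost perturbations with 2R·‖c' − c‖ < δ. -/
theorem lp_optimal_set_stable_quantitative
    (n : ℕ) (V : Finset (EuclideanSpace ℝ (Fin n))) (hV : V.Nonempty)
    (P : Set (EuclideanSpace ℝ (Fin n)))
    (hP : P = convexHull ℝ (V : Set (EuclideanSpace ℝ (Fin n))))
    (R : ℝ) (hR : 0 < R) (hRV : ∀ v ∈ V, ‖v‖ ≤ R)
    (c : EuclideanSpace ℝ (Fin n))
    (μ : ℝ) (hμ₁ : ∀ x ∈ P, μ ≤ ⟪c, x⟫) (hμ₂ : ∃ x ∈ P, ⟪c, x⟫ = μ)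
    (hex : ∃ v ∈ V, μ < ⟪c, v⟫)
    (δ : ℝ) (hδpos : 0 < δ)
    (hδ₁ : ∀ v ∈ V, μ < ⟪c, v⟫ → δ ≤ ⟪c, v⟫ - μ)
    (hδ₂ : ∃ v ∈ V, μ < ⟪c, v⟫ ∧ ⟪c, v⟫ - μ = δ)
    (c' : EuclideanSpace ℝ (Fin n)) (hc' : 2 * R * ‖c' - c‖ < δ)
    (y : EuclideanSpace ℝ (Fin n)) (hy : y ∈ P)
    (hymin : ∀ x ∈ P, ⟪c', y⟫ ≤ ⟪c', x⟫) :
    ∀ x ∈ P, ⟪c, y⟫ ≤ ⟪c, x⟫ := by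
  set ε := ‖c' - c‖ with hε
  have hεnn : 0 ≤ ε := norm_nonneg _
  -- every point of P has norm ≤ R
  have hnormP : ∀ x ∈ P, ‖x‖ ≤ R := by
    intro x hx
    rw [hP] at hx
    have : convexHull ℝ (V : Set (EuclideanSpace ℝ (Fin n))) ⊆
        Metric.closedBall 0 R := by
      apply convexHull_min _ (convex_closedBall 0 R)
      intro v hv
      simpa [Metric.mem_closedBall, dist_eq_norm] using hRV v hv
    simpa [Metric.mem_closedBall, dist_eq_norm] using this hx
  -- perturbation estimate
  have hpert : ∀ x ∈ P, |⟪c' - c, x⟫| ≤ ε * R := by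
    intro x hx
    calc |⟪c' - c, x⟫| ≤ ‖c' - c‖ * ‖x‖ := abs_real_inner_le_norm _ _
      _ ≤ ε * R := by
          apply mul_le_mul_of_nonneg_left (hnormP x hx) hεnn
  obtain ⟨xs, hxs, hxsv⟩ := hμ₂
  -- Step A : ⟪c', y⟫ ≤ μ + ε * R
  have hA : ⟪c', y⟫ ≤ μ + ε * R := by
    have h1 : ⟪c', y⟫ ≤ ⟪c', xs⟫ := hymin xs hxs
    have h2 : ⟪c', xs⟫ = ⟪c, xs⟫ + ⟪c' - c, xs⟫ := by
      rw [inner_sub_left]; ring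
    have h3 := hpert xs hxs
    have := abs_le.1 h3
    linarith [this.2]
  -- Step B : for v ∈ V with μ < ⟪c, v⟫, strict inequality
  have hB : ∀ v ∈ V, μ < ⟪c, v⟫ → ⟪c', y⟫ < ⟪c', v⟫ := by
    intro v hv hlt
    have hδv := hδ₁ v hv hlt
    have h2 : ⟪c', v⟫ = ⟪c, v⟫ + ⟪c' - c, v⟫ := by
      rw [inner_sub_left]; ring
    have hvP : (v : EuclideanSpace ℝ (Fin n)) ∈ P := by
      rw [hP]; exact subset_convexHull ℝ _ hv
    have h3 := abs_le.1 (hpert v hvP)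
    have hεR : 2 * (ε * R) < δ := by
      have : 2 * R * ε < δ := hc'
      linarith [this]
    linarith [h3.1]
  -- convex combination for y
  have hy' := hy
  rw [hP, Finset.mem_convexHull] at hy'
  obtain ⟨w, hw₀, hw₁, hwy⟩ := hy'
  have hyc : y = ∑ v ∈ V, w v • v := by
    rw [← hwy, Finset.centerMass_eq_of_sum_1 _ _ hw₁]
    simp
  have hcy : ∀ d : EuclideanSpace ℝ (Fin n), ⟪d, y⟫ = ∑ v ∈ V, w v * ⟪d, v⟫ := by
    intro d
    rw [hyc, inner_sum]
    exact Finset.sum_congr rfl fun v hv => real_inner_smul_right _ _ _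
  -- each vertex gives value ≥ ⟪c', y⟫
  have hge : ∀ v ∈ V, ⟪c', y⟫ ≤ ⟪c', v⟫ := by
    intro v hv
    exact hymin v (by rw [hP]; exact subset_convexHull ℝ _ hv)
  -- sum of nonneg terms equals zero
  have hsum0 : ∑ v ∈ V, w v * (⟪c', v⟫ - ⟪c', y⟫) = 0 := by
    have : ∑ v ∈ V, w v * (⟪c', v⟫ - ⟪c', y⟫)
        = (∑ v ∈ V, w v * ⟪c', v⟫) - (∑ v ∈ V, w v) * ⟪c', y⟫ := by
      rw [Finset.sum_mul, ← Finset.sum_sub_distrib]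
      exact Finset.sum_congr rfl fun v hv => by ring
    rw [this, hw₁, ← hcy]
    ring
  have hzero : ∀ v ∈ V, w v * (⟪c', v⟫ - ⟪c', y⟫) = 0 := by
    have := (Finset.sum_eq_zero_iff_of_nonneg
      (fun v hv => mul_nonneg (hw₀ v hv) (sub_nonneg.2 (hge v hv)))).1 hsum0
    exact this
  -- w v ≠ 0 → ⟪c, v⟫ = μ
  have hval : ∀ v ∈ V, w v * ⟪c, v⟫ = w v * μ := by
    intro v hv
    rcases eq_or_ne (w v) 0 with h | h
    · rw [h]; ring
    · have heq : ⟪c', v⟫ = ⟪c', y⟫ := by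
        have := hzero v hv
        rcases mul_eq_zero.1 this with h' | h'
        · exact absurd h' h
        · linarith [sub_eq_zero.1 h']
      have hvP : (v : EuclideanSpace ℝ (Fin n)) ∈ P := by
        rw [hP]; exact subset_convexHull ℝ _ hv
      have hge' : μ ≤ ⟪c, v⟫ := hμ₁ v hvP
      rcases lt_or_eq_of_le hge' with hlt | he
      · exact absurd heq (by have := hB v hv hlt; intro h; linarith)
      · rw [← he]
  have hcyμ : ⟪c, y⟫ = μ := by
    rw [hcy c]
    calc ∑ v ∈ V, w v * ⟪c, v⟫ = ∑ v ∈ V, w v * μ := Finset.sum_congr rfl hval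
      _ = μ := by rw [← Finset.sum_mul, hw₁, one_mul]
  intro x hx
  rw [hcyμ]
  exact hμ₁ x hx
end

section
/- Let A be a real m×n matrix, b ∈ ℝ^m, c ∈ ℝ^n with c_i > 0 for all i, and x ∈ ℝ^n with x_i > 0 for all i. Let W = diag(x_1/c_1, …, x_n/c_n), L = A W Aᵀ, suppose L is invertible, and let q = W Aᵀ L⁻¹ b. Then q is the unique minimizer of the energy E(y) = Σ_{i=1}^n c_i y_i² / x_i over the affine set {y ∈ ℝ^n : A y = b}; that is, A q = b and E(q) < E(y) for every y ≠ q with A y = b. -/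
open Matrix

/-- the Physarum direction q is the unique minimizer of the energy
E(y) = Σ cᵢ yᵢ²/xᵢ over the affine set {y : A y = b}. -/
theorem physarum_direction_energy_min
    (m n : ℕ) (A : Matrix (Fin m) (Fin n) ℝ) (b : Fin m → ℝ)
    (c x : Fin n → ℝ) (hc : ∀ i, 0 < c i) (hx : ∀ i, 0 < x i)
    (W : Matrix (Fin n) (Fin n) ℝ) (hW : W = Matrix.diagonal fun i => x i / c i)
    (L : Matrix (Fin m) (Fin m) ℝ) (hL : L = A * W * Aᵀ)
    (hLinv : IsUnit L)
    (q : Fin n → ℝ) (hq : q = W.mulVec (Aᵀ.mulVec (L⁻¹.mulVec b))) :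
    A.mulVec q = b ∧
      ∀ y : Fin n → ℝ, A.mulVec y = b → y ≠ q →
        (∑ i, c i * q i ^ 2 / x i) < ∑ i, c i * y i ^ 2 / x i := by
  have hdet : IsUnit L.det := (Matrix.isUnit_iff_isUnit_det L).mp hLinv
  set u : Fin m → ℝ := L⁻¹.mulVec b with hu
  set v : Fin n → ℝ := Aᵀ.mulVec u with hv
  have hAq : A.mulVec q = b := by
    rw [hq, Matrix.mulVec_mulVec, Matrix.mulVec_mulVec, Matrix.mulVec_mulVec,
      ← hL, Matrix.mul_nonsing_inv L hdet, Matrix.one_mulVec]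
  refine ⟨hAq, fun y hy hyq => ?_⟩
  have hqi : ∀ i, q i = x i / c i * v i := by
    intro i
    rw [hq, hW]
    exact Matrix.mulVec_diagonal _ _ i
  have hcq : ∀ i, c i * q i / x i = v i := by
    intro i
    have h1 := (hc i).ne'
    have h2 := (hx i).ne'
    rw [hqi i]
    field_simp
  have hd : A.mulVec (y - q) = 0 := by
    rw [Matrix.mulVec_sub, hy, hAq, sub_self]
  have hcross : ∑ i, c i * q i / x i * (y i - q i) = 0 := by
    have : ∑ i, c i * q i / x i * (y i - q i) = v ⬝ᵥ (y - q) := by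
      simp [dotProduct, hcq]
    rw [this, hv, Matrix.mulVec_transpose, ← Matrix.dotProduct_mulVec, hd,
      dotProduct_zero]
  have hdiff : ∃ i, y i ≠ q i := by
    by_contra h
    push_neg at h
    exact hyq (funext h)
  obtain ⟨i₀, hi₀⟩ := hdiff
  have hpos : 0 < ∑ i, c i * (y i - q i) ^ 2 / x i := by
    apply Finset.sum_pos' (fun i _ =>
      div_nonneg (mul_nonneg (hc i).le (sq_nonneg _)) (hx i).le)
    exact ⟨i₀, Finset.mem_univ i₀, by
      have h1 : y i₀ - q i₀ ≠ 0 := sub_ne_zero.mpr hi₀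
      have h2 := hc i₀; have h3 := hx i₀
      positivity⟩
  have hexp : ∑ i, c i * y i ^ 2 / x i =
      (∑ i, c i * q i ^ 2 / x i) + (∑ i, c i * (y i - q i) ^ 2 / x i)
        + 2 * ∑ i, c i * q i / x i * (y i - q i) := by
    rw [Finset.mul_sum, ← Finset.sum_add_distrib, ← Finset.sum_add_distrib]
    apply Finset.sum_congr rfl
    intro i _
    have hxne := (hx i).ne'
    field_simp
    ring
  rw [hexp, hcross]
  linarith
end

section
/- Let A be a real m×n matrix, b ∈ ℝ^m, c ∈ ℝ^n with c_i > 0 for all i, and let x ∈ ℝ^n satisfy x_i > 0 for all i and A x = b. Let W = diag(x_1/c_1, …, x_n/c_n), L = A W Aᵀ, suppose L is invertible, and let q = W Aᵀ L⁻¹ b. Then the energy of q is bounded by the cost of x: Σ_{i=1}^n c_i q_i² / x_i ≤ cᵀx. -/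
/-!
The Physarum direction `q = W Aᵀ y` (with `y = L⁻¹ b`) is the minimum-energy point of the affine
space `{z | A z = b}`: for `A e = 0` the cross term `Σ c_i q_i e_i / x_i = (Aᵀ y) ⬝ᵥ e = y ⬝ᵥ A e`
vanishes, so `E(q + e) = E(q) + E(e) ≥ E(q)`. Since `x` itself is feasible, `E(q) ≤ E(x) = cᵀx`.
-/

open Matrix

namespace Physarum

variable {ι κ : Type*} [Fintype ι] [Fintype κ]

noncomputable def energy (c x z : ι → ℝ) : ℝ := ∑ i, c i * z i ^ 2 / x i

theorem energy_self (c x : ι → ℝ) (hx : ∀ i, x i ≠ 0) : energy c x x = c ⬝ᵥ x := by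
  refine Finset.sum_congr rfl fun i _ => ?_
  field_simp [hx i]

theorem energy_nonneg {c x : ι → ℝ} (hc : ∀ i, 0 ≤ c i) (hx : ∀ i, 0 ≤ x i) (z : ι → ℝ) :
    0 ≤ energy c x z :=
  Finset.sum_nonneg fun i _ => div_nonneg (mul_nonneg (hc i) (sq_nonneg _)) (hx i)

theorem energy_add (c x q e : ι → ℝ) :
    energy c x (q + e) = energy c x q + energy c x e + 2 * ∑ i, c i * q i * e i / x i := by
  simp only [energy, Pi.add_apply, Finset.mul_sum, ← Finset.sum_add_distrib]
  refine Finset.sum_congr rfl fun i _ => ?_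
  ring

theorem sum_mul_diagonal_mulVec_mul_div_eq_dotProduct [DecidableEq ι] {c x : ι → ℝ}
    (hc : ∀ i, c i ≠ 0) (hx : ∀ i, x i ≠ 0) (p e : ι → ℝ) :
    ∑ i, c i * (diagonal (fun i => x i / c i) *ᵥ p) i * e i / x i = p ⬝ᵥ e := by
  refine Finset.sum_congr rfl fun i _ => ?_
  rw [mulVec_diagonal]
  field_simp [hc i, hx i]

theorem energy_le_of_mulVec_eq [DecidableEq ι] {c x : ι → ℝ} (hc : ∀ i, 0 < c i)
    (hx : ∀ i, 0 < x i) (A : Matrix κ ι ℝ) (y : κ → ℝ) {z : ι → ℝ}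
    (hz : A *ᵥ z = A *ᵥ (diagonal (fun i => x i / c i) *ᵥ (Aᵀ *ᵥ y))) :
    energy c x (diagonal (fun i => x i / c i) *ᵥ (Aᵀ *ᵥ y)) ≤ energy c x z := by
  set q := diagonal (fun i => x i / c i) *ᵥ (Aᵀ *ᵥ y)
  have hAe : A *ᵥ (z - q) = 0 := by rw [mulVec_sub, hz, sub_self]
  have hcross : ∑ i, c i * q i * (z - q) i / x i = 0 := by
    rw [sum_mul_diagonal_mulVec_mul_div_eq_dotProduct (fun i => (hc i).ne') (fun i => (hx i).ne'),
      mulVec_transpose, ← dotProduct_mulVec, hAe, dotProduct_zero]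
  have hsplit := energy_add c x q (z - q)
  rw [add_sub_cancel, hcross, mul_zero, add_zero] at hsplit
  linarith [energy_nonneg (fun i => (hc i).le) (fun i => (hx i).le) (z - q)]

theorem mulVec_mulVec_nonsing_inv_mulVec [DecidableEq κ] (A : Matrix κ ι ℝ) (W : Matrix ι ι ℝ)
    (hL : IsUnit (A * W * Aᵀ)) (b : κ → ℝ) :
    A *ᵥ (W *ᵥ (Aᵀ *ᵥ ((A * W * Aᵀ)⁻¹ *ᵥ b))) = b := by
  rw [mulVec_mulVec, mulVec_mulVec, mulVec_mulVec,
    mul_nonsing_inv _ ((isUnit_iff_isUnit_det _).mp hL), one_mulVec]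

end Physarum

/-- the energy of the Physarum direction q is bounded by the cost
of the current feasible point x. -/
theorem physarum_energy_le_cost
    (m n : ℕ) (A : Matrix (Fin m) (Fin n) ℝ) (b : Fin m → ℝ)
    (c x : Fin n → ℝ) (hc : ∀ i, 0 < c i) (hx : ∀ i, 0 < x i)
    (hxfeas : A.mulVec x = b)
    (W : Matrix (Fin n) (Fin n) ℝ) (hW : W = Matrix.diagonal fun i => x i / c i)
    (L : Matrix (Fin m) (Fin m) ℝ) (hL : L = A * W * Aᵀ)
    (hLinv : IsUnit L)
    (q : Fin n → ℝ) (hq : q = W.mulVec (Aᵀ.mulVec (L⁻¹.mulVec b))) :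
    (∑ i, c i * q i ^ 2 / x i) ≤ c ⬝ᵥ x := by
  subst hW hL hq
  calc Physarum.energy c x _ ≤ Physarum.energy c x x :=
        Physarum.energy_le_of_mulVec_eq hc hx A _ <| by
          rw [hxfeas, Physarum.mulVec_mulVec_nonsing_inv_mulVec _ _ hLinv]
    _ = c ⬝ᵥ x := Physarum.energy_self c x fun i => (hx i).ne'
end

section
/- Let A be a real m×n matrix, b ∈ ℝ^m, c ∈ ℝ^n with c_i > 0 for all i, and let x ∈ ℝ^n satisfy x_i > 0 for all i and A x = b. Let W = diag(x_1/c_1, …, x_n/c_n), L = A W Aᵀ, suppose L is invertible, and let q = W Aᵀ L⁻¹ b. Then cᵀq ≤ cᵀx; that is, the Physarum direction does not increase the linear objective at any strictly positive feasible point. -/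
open Matrix

/-- the Physarum direction does not increase the linear objective
at any strictly positive feasible point: cᵀq ≤ cᵀx. -/
theorem physarum_direction_cost_nonincreasing
    (m n : ℕ) (A : Matrix (Fin m) (Fin n) ℝ) (b : Fin m → ℝ)
    (c x : Fin n → ℝ) (hc : ∀ i, 0 < c i) (hx : ∀ i, 0 < x i)
    (hxfeas : A.mulVec x = b)
    (W : Matrix (Fin n) (Fin n) ℝ) (hW : W = Matrix.diagonal fun i => x i / c i)
    (L : Matrix (Fin m) (Fin m) ℝ) (hL : L = A * W * Aᵀ)
    (hLinv : IsUnit L)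
    (q : Fin n → ℝ) (hq : q = W.mulVec (Aᵀ.mulVec (L⁻¹.mulVec b))) :
    c ⬝ᵥ q ≤ c ⬝ᵥ x := by
  set p : Fin m → ℝ := L⁻¹.mulVec b with hp
  set y : Fin n → ℝ := Aᵀ.mulVec p with hy
  have hcne : ∀ i, (c i : ℝ) ≠ 0 := fun i => (hc i).ne'
  -- c ⬝ᵥ q = ∑ x i * y i
  have h1 : c ⬝ᵥ q = ∑ i, x i * y i := by
    subst hq hW
    simp only [dotProduct, mulVec_diagonal]
    refine Finset.sum_congr rfl fun i _ => ?_
    field_simp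
    linear_combination x i * y i * mul_inv_cancel₀ (hcne i)
  -- ∑ x i * y i = b ⬝ᵥ p
  have h2 : ∑ i, x i * y i = b ⬝ᵥ p := by
    have : ∑ i, x i * y i = x ⬝ᵥ Aᵀ.mulVec p := rfl
    rw [this, dotProduct_mulVec, vecMul_transpose, hxfeas]
  -- b ⬝ᵥ p = ∑ (x i / c i) * y i ^ 2
  have hLb : L.mulVec p = b := by
    rw [hp, mulVec_mulVec, Matrix.mul_nonsing_inv _ ((Matrix.isUnit_iff_isUnit_det L).mp hLinv),
      one_mulVec]
  have h3 : b ⬝ᵥ p = ∑ i, (x i / c i) * y i ^ 2 := by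
    rw [← hLb, hL]
    have : (A * W * Aᵀ).mulVec p = A.mulVec (W.mulVec y) := by
      rw [hy, ← mulVec_mulVec, ← mulVec_mulVec]
    rw [this, dotProduct_comm, dotProduct_mulVec, ← mulVec_transpose, ← hy]
    subst hW
    simp only [dotProduct, mulVec_diagonal]
    refine Finset.sum_congr rfl fun i _ => ?_
    ring
  set s : ℝ := ∑ i, (x i / c i) * y i ^ 2 with hs
  have hcq : c ⬝ᵥ q = s := by rw [h1, h2, h3]
  have hsnn : 0 ≤ s := Finset.sum_nonneg fun i _ =>
    mul_nonneg (div_nonneg (hx i).le (hc i).le) (sq_nonneg _)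
  have hcx : c ⬝ᵥ x = ∑ i, c i * x i := rfl
  have hTnn : 0 ≤ c ⬝ᵥ x := by
    rw [hcx]; exact Finset.sum_nonneg fun i _ => mul_nonneg (hc i).le (hx i).le
  -- Cauchy-Schwarz
  have hcs : s ^ 2 ≤ (c ⬝ᵥ x) * s := by
    have key := Finset.sum_mul_sq_le_sq_mul_sq Finset.univ
      (fun i => Real.sqrt (c i * x i)) (fun i => Real.sqrt (x i / c i) * y i)
    have e1 : ∀ i : Fin n, Real.sqrt (c i * x i) * (Real.sqrt (x i / c i) * y i)
        = x i * y i := by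
      intro i
      rw [← mul_assoc, ← Real.sqrt_mul (mul_nonneg (hc i).le (hx i).le)]
      have : c i * x i * (x i / c i) = x i ^ 2 := by
        field_simp
        linear_combination x i ^ 2 * mul_inv_cancel₀ (hcne i)
      rw [this, Real.sqrt_sq (hx i).le]
    have e2 : ∀ i : Fin n, Real.sqrt (c i * x i) ^ 2 = c i * x i := fun i =>
      Real.sq_sqrt (mul_nonneg (hc i).le (hx i).le)
    have e3 : ∀ i : Fin n, (Real.sqrt (x i / c i) * y i) ^ 2 = x i / c i * y i ^ 2 := by
      intro i
      rw [mul_pow, Real.sq_sqrt (div_nonneg (hx i).le (hc i).le)]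
    simp only [e1, e2, e3] at key
    calc s ^ 2 = (∑ i, x i * y i) ^ 2 := by rw [h2, h3]
      _ ≤ (∑ i, c i * x i) * s := key
      _ = (c ⬝ᵥ x) * s := by rw [hcx]
  rw [hcq]
  nlinarith [hcs, hsnn, hTnn]
end
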